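/- (Factorization of the cubic phase in conic coordinates for collinear spatial frequencies.) Let e ∈ ℝ² be a unit vector and let η̄ = (η₀, p·e), σ̄ = (σ₀, q·e), ρ̄ = (ρ₀, r·e) with p, q, r ∈ ℝ, and set ξ̄ = η̄ + σ̄ + ρ̄. Define, for a vector v̄ with v = t·e, the signed conic coordinates A(v̄) = √3·v₀ + t and B(v̄) = √3·v₀ − t. Then 6√3 · φ₃(ξ̄, η̄, σ̄) = 3(A(η̄)+A(σ̄))(A(σ̄)+A(ρ̄))(A(ρ̄)+A(η̄)) + 3(B(η̄)+B(σ̄))(B(σ̄)+B(ρ̄))(B(ρ̄)+B(η̄)). -/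

import Mathlib

/-!
With `A = √3 v₀ + t` and `B = √3 v₀ - t` one has `6√3 · v₀(v₀² + t²) = A³ + B³`, and along a
line `v = t·e` the dispersion relation is `ω(v̄) = v₀(v₀² + t²)`. Both coordinates are additive,
so `6√3 φ₃` splits into `(Aη + Aσ + Aρ)³ - Aη³ - Aσ³ - Aρ³` plus the same expression in `B`,
and each of these factors by `(x + y + z)³ - x³ - y³ - z³ = 3(x + y)(y + z)(z + x)`.
-/

noncomputable section

/-- The frequency space `ℝ × ℝ²`, represented as Euclidean `ℝ³`:
coordinate `0` is `v₀` and coordinates `1, 2` form the spatial part `v`. -/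
abbrev E3 : Type := EuclideanSpace ℝ (Fin 3)

/-- The dispersion relation `ω(v̄) = v₀(v₀² + |v|²)`. -/
def omega (v : E3) : ℝ := v 0 * ((v 0) ^ 2 + (v 1) ^ 2 + (v 2) ^ 2)

/-- The cubic phase `φ₃(ξ̄,η̄,σ̄) = ω(ξ̄) − ω(η̄) − ω(σ̄) − ω(ρ̄)` with `ρ̄ = ξ̄ − η̄ − σ̄`. -/
def phi3 (ξ η σ : E3) : ℝ := omega ξ - omega η - omega σ - omega (ξ - η - σ)

/-- Build an element of `E3` from its three coordinates. -/
def vec3 (a b c : ℝ) : E3 := WithLp.toLp 2 ![a, b, c]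

theorem add_add_pow_three_sub_pow_three {R : Type*} [CommRing R] (x y z : R) :
    (x + y + z) ^ 3 - x ^ 3 - y ^ 3 - z ^ 3 = 3 * (x + y) * (y + z) * (z + x) := by
  ring

theorem six_mul_sqrt_three_mul_cubic (v₀ t : ℝ) :
    6 * √3 * (v₀ * (v₀ ^ 2 + t ^ 2)) = (√3 * v₀ + t) ^ 3 + (√3 * v₀ - t) ^ 3 := by
  have h3 : √3 ^ 2 = 3 := Real.sq_sqrt (by norm_num)
  linear_combination (-2 * √3 * v₀ ^ 3) * h3

theorem vec3_add (a b c a' b' c' : ℝ) :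
    vec3 a b c + vec3 a' b' c' = vec3 (a + a') (b + b') (c + c') := by
  ext i
  fin_cases i <;> simp [vec3]

theorem omega_vec3_mul_unit {e₁ e₂ : ℝ} (he : e₁ ^ 2 + e₂ ^ 2 = 1) (v₀ t : ℝ) :
    omega (vec3 v₀ (t * e₁) (t * e₂)) = v₀ * (v₀ ^ 2 + t ^ 2) := by
  simp only [omega, vec3, Fin.isValue, Matrix.cons_val_zero, Matrix.cons_val_one,
    Matrix.cons_val_two, Matrix.head_cons, Matrix.tail_cons]
  linear_combination v₀ * t ^ 2 * he

theorem phi3_add_add (η σ ρ : E3) :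
    phi3 (η + σ + ρ) η σ = omega (η + σ + ρ) - omega η - omega σ - omega ρ := by
  rw [phi3, show η + σ + ρ - η - σ = ρ by abel]

/-- factorization of the cubic phase in conic coordinates for collinear
spatial frequencies: with `e = (e₁,e₂)` a unit vector, `η̄ = (η₀, p·e)`,
`σ̄ = (σ₀, q·e)`, `ρ̄ = (ρ₀, r·e)`, `ξ̄ = η̄ + σ̄ + ρ̄`, and the signed conic coordinates
`A(v̄) = √3·v₀ + t`, `B(v̄) = √3·v₀ − t` for `v = t·e`, one has
`6√3 φ₃(ξ̄,η̄,σ̄) = 3(Aη+Aσ)(Aσ+Aρ)(Aρ+Aη) + 3(Bη+Bσ)(Bσ+Bρ)(Bρ+Bη)`. -/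
theorem stmt_5 (e1 e2 : ℝ) (he : e1 ^ 2 + e2 ^ 2 = 1) (η0 σ0 ρ0 p q r : ℝ) :
    6 * Real.sqrt 3 *
        phi3
          (vec3 η0 (p * e1) (p * e2) + vec3 σ0 (q * e1) (q * e2) + vec3 ρ0 (r * e1) (r * e2))
          (vec3 η0 (p * e1) (p * e2)) (vec3 σ0 (q * e1) (q * e2)) =
      3 * ((Real.sqrt 3 * η0 + p) + (Real.sqrt 3 * σ0 + q)) *
          ((Real.sqrt 3 * σ0 + q) + (Real.sqrt 3 * ρ0 + r)) *
          ((Real.sqrt 3 * ρ0 + r) + (Real.sqrt 3 * η0 + p)) +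
      3 * ((Real.sqrt 3 * η0 - p) + (Real.sqrt 3 * σ0 - q)) *
          ((Real.sqrt 3 * σ0 - q) + (Real.sqrt 3 * ρ0 - r)) *
          ((Real.sqrt 3 * ρ0 - r) + (Real.sqrt 3 * η0 - p)) := by
  have hξ : vec3 η0 (p * e1) (p * e2) + vec3 σ0 (q * e1) (q * e2) + vec3 ρ0 (r * e1) (r * e2)
      = vec3 (η0 + σ0 + ρ0) ((p + q + r) * e1) ((p + q + r) * e2) := by
    simp only [vec3_add, add_mul]
  rw [phi3_add_add, hξ, omega_vec3_mul_unit he, omega_vec3_mul_unit he, omega_vec3_mul_unit he,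
    omega_vec3_mul_unit he]
  linear_combination six_mul_sqrt_three_mul_cubic (η0 + σ0 + ρ0) (p + q + r)
    - six_mul_sqrt_three_mul_cubic η0 p - six_mul_sqrt_three_mul_cubic σ0 q
    - six_mul_sqrt_three_mul_cubic ρ0 r
    + add_add_pow_three_sub_pow_three (√3 * η0 + p) (√3 * σ0 + q) (√3 * ρ0 + r)
    + add_add_pow_three_sub_pow_three (√3 * η0 - p) (√3 * σ0 - q) (√3 * ρ0 - r)
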